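/- In overparameterized linear regression with minimum-norm interpolant θ̂ = Yᵀ(YYᵀ)^† Z, the bias part of the excess risk satisfies (θ*)ᵀ(I − Π_Y) Σ (I − Π_Y) θ* ≤ ‖θ*‖² · ‖Σ − (1/n) Yᵀ Y‖, where Π_Y = Yᵀ(YYᵀ)^{−1}Y is the orthogonal projection onto the row space of the design operator Y and Σ is the population covariance of the covariates. -/

import Mathlib

set_option maxHeartbeats 400000

noncomputable section

open ContinuousLinearMap

/-- Bias bound for overparameterized linear regression: with `Π_Y = Yᵀ(YYᵀ)⁻¹Y` the
orthogonal projection onto the row space of the design operator `Y`,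
`(θ*)ᵀ(I - Π_Y) Σ (I - Π_Y) θ* ≤ ‖θ*‖² ‖Σ - (1/n) Yᵀ Y‖`. -/
theorem overparameterized_bias_bound
    {H : Type*} [NormedAddCommGroup H] [InnerProductSpace ℝ H] [CompleteSpace H]
    (n : ℕ) (hn : 1 ≤ n)
    (Y : H →L[ℝ] EuclideanSpace ℝ (Fin n))
    (hinv : IsUnit (Y ∘L ContinuousLinearMap.adjoint Y))
    (Sig : H →L[ℝ] H) (θstar : H) :
    let Pi : H →L[ℝ] H :=
      (ContinuousLinearMap.adjoint Y) ∘L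
        (Ring.inverse (Y ∘L ContinuousLinearMap.adjoint Y)) ∘L Y
    @inner ℝ _ _ (((1 - Pi) ∘L Sig ∘L (1 - Pi)) θstar) θstar ≤
      ‖θstar‖ ^ 2 * ‖Sig - (n : ℝ)⁻¹ • ((ContinuousLinearMap.adjoint Y) ∘L Y)‖ := by
  intro Pi
  set A := Y ∘L ContinuousLinearMap.adjoint Y with hA
  set B := Ring.inverse A with hB
  -- Y ∘L Pi = Y
  have hYPi : Y ∘L Pi = Y := by
    have h1 : Y ∘L Pi = (A * B) ∘L Y := by
      simp only [Pi, hA, mul_def]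
      ext x; simp [ContinuousLinearMap.comp_apply]
      rfl
    rw [h1, Ring.mul_inverse_cancel A hinv, one_def, ContinuousLinearMap.id_comp]
  -- A is self-adjoint
  have hAsa : ContinuousLinearMap.adjoint A = A := by
    rw [hA, adjoint_comp, adjoint_adjoint]
  have hBsa : ContinuousLinearMap.adjoint B = B := by
    rw [← star_eq_adjoint, hB, ← Ring.inverse_star, star_eq_adjoint, hAsa]
  -- Pi is self-adjoint
  have hPisa : ContinuousLinearMap.adjoint Pi = Pi := by
    show ContinuousLinearMap.adjoint (ContinuousLinearMap.adjoint Y ∘L B ∘L Y) = _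
    rw [adjoint_comp, adjoint_comp, adjoint_adjoint, hBsa]
    simp only [Pi]
    ext x; simp [ContinuousLinearMap.comp_apply]
    rfl
  -- Pi idempotent
  have hPi2 : Pi ∘L Pi = Pi := by
    have h1 : Pi ∘L Pi = ContinuousLinearMap.adjoint Y ∘L B ∘L (Y ∘L Pi) := by
      simp only [Pi]; ext x; simp [ContinuousLinearMap.comp_apply]
      rfl
    rw [h1, hYPi]
  set u := θstar - Pi θstar with hu
  have huapp : (1 - Pi) θstar = u := by rw [hu]; simp [sub_apply]
  have hYu : Y u = 0 := by
    have h1 := congrArg (fun T => T θstar) hYPi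
    simp only [ContinuousLinearMap.comp_apply] at h1
    rw [hu, map_sub, h1, sub_self]
  have hPiu : Pi u = 0 := by
    have h1 := congrArg (fun T => T θstar) hPi2
    simp only [ContinuousLinearMap.comp_apply] at h1
    rw [hu, map_sub, h1, sub_self]
  -- orthogonality and Pythagoras
  have hortho : @inner ℝ _ _ (Pi θstar) u = 0 := by
    have h1 : Pi θstar = (ContinuousLinearMap.adjoint Pi) θstar := by rw [hPisa]
    rw [h1, adjoint_inner_left, hPiu, inner_zero_right]
  have hnu : ‖u‖ ≤ ‖θstar‖ := by
    have h2 : (‖u‖ : ℝ) ^ 2 ≤ ‖u‖ * ‖θstar‖ := by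
      have h3 : (‖u‖ : ℝ) ^ 2 = @inner ℝ _ _ u θstar := by
        have h4 : @inner ℝ _ _ u θstar = @inner ℝ _ _ u (Pi θstar) + @inner ℝ _ _ u u := by
          rw [← inner_add_right]
          congr 1
          rw [hu]; abel
        have h5 : @inner ℝ _ _ u (Pi θstar) = 0 := by
          rw [real_inner_comm]; exact hortho
        rw [← real_inner_self_eq_norm_sq, h4, h5, zero_add]
      rw [h3]; exact real_inner_le_norm u θstar
    rcases (norm_nonneg u).eq_or_lt with h | h
    · rw [← h]; exact norm_nonneg θstar
    · nlinarith
  set M := Sig - (n : ℝ)⁻¹ • ((ContinuousLinearMap.adjoint Y) ∘L Y) with hM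
  -- key algebraic identity
  have hkey : ((1 - Pi) ∘L Sig ∘L (1 - Pi)) θstar = (1 - Pi) (M u) := by
    have h0 : ((ContinuousLinearMap.adjoint Y) ∘L Y) u = 0 := by
      rw [ContinuousLinearMap.comp_apply, hYu, map_zero]
    rw [ContinuousLinearMap.comp_apply, ContinuousLinearMap.comp_apply, huapp]
    congr 1
    rw [hM, sub_apply, smul_apply, h0, smul_zero, sub_zero]
  rw [hkey]
  have h1Psa : ContinuousLinearMap.adjoint (1 - Pi : H →L[ℝ] H) = 1 - Pi := by
    rw [map_sub, hPisa]
    congr 1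
    exact adjoint_id
  have step1 : @inner ℝ _ _ ((1 - Pi) (M u)) θstar = @inner ℝ _ _ (M u) u := by
    have h2 : (1 - Pi) (M u) = (ContinuousLinearMap.adjoint (1 - Pi : H →L[ℝ] H)) (M u) := by
      rw [h1Psa]
    rw [h2, adjoint_inner_left, huapp]
  rw [step1]
  calc @inner ℝ _ _ (M u) u ≤ ‖M u‖ * ‖u‖ := real_inner_le_norm _ _
    _ ≤ (‖M‖ * ‖u‖) * ‖u‖ :=
        mul_le_mul_of_nonneg_right (le_opNorm M u) (norm_nonneg u)
    _ ≤ (‖M‖ * ‖θstar‖) * ‖θstar‖ := by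
        have h1 : ‖M‖ * ‖u‖ ≤ ‖M‖ * ‖θstar‖ :=
          mul_le_mul_of_nonneg_left hnu (norm_nonneg M)
        have h2 : (‖M‖ * ‖u‖) * ‖u‖ ≤ (‖M‖ * ‖θstar‖) * ‖u‖ :=
          mul_le_mul_of_nonneg_right h1 (norm_nonneg u)
        exact h2.trans (mul_le_mul_of_nonneg_left hnu (by positivity))
    _ = ‖θstar‖ ^ 2 * ‖M‖ := by ring
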